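/- Let m > 4 be an integer, let v : ℝ^m ∖ {0} → ℝ^{m³} be the cubic Misawa–Nakauchi map, let β ∈ (0, π/2) satisfy sin²β = (5/6)·(m−1)/(m+1), and define ṽ(x) = (sin β · v(x), cos β) with values in 𝕊^{m³} ⊂ ℝ^{m³+1}. Then the energy density of ṽ satisfies |∇ṽ(x)|²/2 = (5/4)·(m−1)/r(x)² for every x ∈ ℝ^m ∖ {0}. -/

import Mathlib

noncomputable section

open Real MeasureTheory

/-- Partial derivative of `f` in the `a`-th coordinate direction. -/
def pd {m : ℕ} (a : Fin m) (f : EuclideanSpace ℝ (Fin m) → ℝ)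
    (x : EuclideanSpace ℝ (Fin m)) : ℝ :=
  fderiv ℝ f x (EuclideanSpace.single a 1)

/-- Euclidean Laplacian `Δf = Σ_a ∂²f/∂x_a²`. -/
def lap {m : ℕ} (f : EuclideanSpace ℝ (Fin m) → ℝ)
    (x : EuclideanSpace ℝ (Fin m)) : ℝ :=
  ∑ a : Fin m, pd a (pd a f) x

/-- Squared norm of the total derivative: `|∇w|² = Σ_{k,a} (∂_k w_a)²`. -/
def gradSq {m : ℕ} {ι : Type*} [Fintype ι]
    (w : ι → EuclideanSpace ℝ (Fin m) → ℝ) (x : EuclideanSpace ℝ (Fin m)) : ℝ :=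
  ∑ k : Fin m, ∑ a : ι, (pd k (w a) x) ^ 2

/-- The cubic Misawa–Nakauchi map
`v_{ijk}(x) = (1/√((m−1)(m+2)))(δ_{ij}x_k/r + δ_{jk}x_i/r + δ_{ik}x_j/r − (m+2)xᵢxⱼx_k/r³)`. -/
def vMN (m : ℕ) (i j k : Fin m) (x : EuclideanSpace ℝ (Fin m)) : ℝ :=
  (1 / Real.sqrt (((m : ℝ) - 1) * ((m : ℝ) + 2))) *
    ((if i = j then (1 : ℝ) else 0) * x k / ‖x‖
      + (if j = k then (1 : ℝ) else 0) * x i / ‖x‖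
      + (if i = k then (1 : ℝ) else 0) * x j / ‖x‖
      - ((m : ℝ) + 2) * x i * x j * x k / ‖x‖ ^ 3)


/-- The rotated map `ṽ_β = (sin β · v, cos β)`, with values in `ℝ^{m³+1} = ℝ^{m³} × ℝ`. -/
def vTilde (m : ℕ) (β : ℝ) :
    (Fin m × Fin m × Fin m) ⊕ Unit → EuclideanSpace ℝ (Fin m) → ℝ
  | Sum.inl p => fun x => Real.sin β * vMN m p.1 p.2.1 p.2.2 x
  | Sum.inr _ => fun _ => Real.cos β

/-!
Write `r = |x|` and `u = x / r`. Then `v = c · Q(u)`, where `c = ((m - 1)(m + 2))^{-1/2}` and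
`Q_{ijk}(u) = δ_{ij} u_k + δ_{jk} u_i + δ_{ik} u_j - C u_i u_j u_k` with `C = m + 2`. By the chain
rule, `∂_a v = c · DQ(u)[p_a]`, where `p_a = ∂_a u = (e_a - u_a u) / r` is tangent to the sphere.
For a unit vector `u` and `p ⊥ u`, expanding the square gives
`|DQ(u)[p]|² = 3 (m + 2 - 2C + C²) |p|²`, which equals `3 (m + 1)(m + 2) |p|²` for `C = m + 2`.
Since `Σ_a |p_a|² = (m - 1) / r²`, this gives `|∇v|² = 3 (m + 1) / r²`. Passing to `ṽ` multiplies
this by `sin² β`, and the chosen value of `sin² β` turns the result into `(5/2)(m - 1) / r²`.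
-/

open Finset

section Tensor

variable {ι : Type*} [Fintype ι] [DecidableEq ι]

def mnCubic (C : ℝ) (u : ι → ℝ) (i j k : ι) : ℝ :=
  (if i = j then 1 else 0) * u k + (if j = k then 1 else 0) * u i
    + (if i = k then 1 else 0) * u j - C * (u i * u j * u k)

def mnCubicDeriv (C : ℝ) (u p : ι → ℝ) (i j k : ι) : ℝ :=
  (if i = j then 1 else 0) * p k + (if j = k then 1 else 0) * p i
    + (if i = k then 1 else 0) * p j - C * (p i * u j * u k + u i * p j * u k + u i * u j * p k)

variable {C : ℝ} {u p : ι → ℝ}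

lemma sum_sum_sq_mnCubicDeriv (hu : u ⬝ᵥ u = 1) (hpu : p ⬝ᵥ u = 0) (i : ι) :
    ∑ j, ∑ k, mnCubicDeriv C u p i j k ^ 2 =
      2 * (p ⬝ᵥ p) + 2 * (C ^ 2 - 2 * C) * (p ⬝ᵥ p) * (u i * u i)
        + (Fintype.card ι + 6 - 2 * C + C ^ 2) * (p i * p i) := by
  set e : ι → ℝ := Pi.single i 1
  set a : ι → ℝ := e - (C * u i) • u
  set s : ι → ℝ := p i • u + u i • p
  -- Each `k`-slice is a combination of `p`, `u` and two basis vectors, so its squared length is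
  -- read off from the Gram matrix of these four vectors.
  have slice (j : ι) : (fun k => mnCubicDeriv C u p i j k) =
      a j • p - (C * s j) • u + p i • Pi.single j 1 + p j • e := by
    ext k
    simp only [mnCubicDeriv, a, s, e, Pi.add_apply, Pi.sub_apply, Pi.smul_apply, smul_eq_mul,
      Pi.single_apply]
    split_ifs <;> grind
  have sum_sq_slice (j : ι) : ∑ k, mnCubicDeriv C u p i j k ^ 2 =
      (p ⬝ᵥ p) * (a j * a j) + (C ^ 2 - 2 * C) * (s j * s j) + p i * p i + p j * p j
        + 4 * p i * (a j * p j) + 2 * p i * (e j * p j) := by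
    calc ∑ k, mnCubicDeriv C u p i j k ^ 2
        = (fun k => mnCubicDeriv C u p i j k) ⬝ᵥ (fun k => mnCubicDeriv C u p i j k) := by
          simp only [dotProduct, sq]
      _ = _ := by
          rw [slice]
          simp only [add_dotProduct, dotProduct_add, sub_dotProduct, dotProduct_sub,
            smul_dotProduct, dotProduct_smul, single_dotProduct, dotProduct_single, hu, hpu,
            dotProduct_comm u p, smul_eq_mul, Pi.add_apply, Pi.sub_apply, Pi.smul_apply, s, e,
            Pi.single_eq_same, Pi.single_apply]
          split_ifs <;> grind
  have sum_mul_eq_dotProduct (v w : ι → ℝ) : ∑ j, v j * w j = v ⬝ᵥ w := rfl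
  simp only [sum_sq_slice, sum_add_distrib, ← mul_sum, sum_const, card_univ, nsmul_eq_mul]
  simp only [sum_mul_eq_dotProduct]
  simp only [a, s, e, add_dotProduct, dotProduct_add, sub_dotProduct, dotProduct_sub,
    smul_dotProduct, dotProduct_smul, single_dotProduct, dotProduct_single, hu, hpu,
    dotProduct_comm u p, smul_eq_mul, Pi.sub_apply, Pi.smul_apply, Pi.single_eq_same]
  ring

theorem sum_sq_mnCubicDeriv (hu : u ⬝ᵥ u = 1) (hpu : p ⬝ᵥ u = 0) :
    ∑ i, ∑ j, ∑ k, mnCubicDeriv C u p i j k ^ 2 =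
      3 * (Fintype.card ι + 2 - 2 * C + C ^ 2) * (p ⬝ᵥ p) := by
  simp only [sum_sum_sq_mnCubicDeriv hu hpu, sum_add_distrib, ← mul_sum, sum_const, card_univ,
    nsmul_eq_mul]
  change _ + _ * (u ⬝ᵥ u) + _ * (p ⬝ᵥ p) = _
  rw [hu]
  ring

end Tensor

lemma hasFDerivAt_norm_of_ne_zero {F : Type*} [NormedAddCommGroup F] [InnerProductSpace ℝ F]
    {x : F} (hx : x ≠ 0) : HasFDerivAt (fun y : F => ‖y‖) (‖x‖⁻¹ • innerSL ℝ x) x := by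
  have h := (hasStrictFDerivAt_norm_sq x).hasFDerivAt.sqrt (by positivity)
  simp only [Real.sqrt_sq (norm_nonneg _)] at h
  convert h using 1
  ext y
  simp
  ring

lemma hasFDerivAt_coord_div_norm {ι : Type*} [Fintype ι] {x : EuclideanSpace ℝ ι} (hx : x ≠ 0)
    (t : ι) :
    HasFDerivAt (fun y : EuclideanSpace ℝ ι => y t / ‖y‖)
      (‖x‖⁻¹ • (EuclideanSpace.proj t - (x t / ‖x‖ ^ 2) • innerSL ℝ x)) x := by
  have hr : ‖x‖ ≠ 0 := norm_ne_zero_iff.mpr hx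
  simp only [div_eq_mul_inv]
  refine (((EuclideanSpace.proj (𝕜 := ℝ) t).hasFDerivAt (x := x)).fun_mul
    ((hasDerivAt_inv hr).comp_hasFDerivAt x (hasFDerivAt_norm_of_ne_zero hx))).congr_fderiv ?_
  ext y
  simp
  field_simp
  ring

lemma fderiv_mnCubic_comp_apply {ι E : Type*} [Fintype ι] [DecidableEq ι] [NormedAddCommGroup E]
    [NormedSpace ℝ E] {U : E → ι → ℝ} {x : E} (hU : ∀ t, DifferentiableAt ℝ (fun y => U y t) x)
    (C : ℝ) (i j k : ι) (v : E) :
    fderiv ℝ (fun y => mnCubic C (U y) i j k) x v =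
      mnCubicDeriv C (U x) (fun t => fderiv ℝ (fun y => U y t) x v) i j k := by
  have h := ((((hU k).hasFDerivAt.const_mul (if i = j then (1 : ℝ) else 0)).fun_add
    ((hU i).hasFDerivAt.const_mul (if j = k then (1 : ℝ) else 0))).fun_add
    ((hU j).hasFDerivAt.const_mul (if i = k then (1 : ℝ) else 0))).fun_sub
    ((((hU i).hasFDerivAt.fun_mul (hU j).hasFDerivAt).fun_mul (hU k).hasFDerivAt).const_mul C)
  rw [(show HasFDerivAt (fun y => mnCubic C (U y) i j k) _ x from h).fderiv]
  simp only [mnCubicDeriv, add_apply, sub_apply, smul_apply, smul_eq_mul]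
  ring

lemma pd_const_mul {m : ℕ} (a : Fin m) (c : ℝ) (f : EuclideanSpace ℝ (Fin m) → ℝ)
    (x : EuclideanSpace ℝ (Fin m)) : pd a (fun y => c * f y) x = c * pd a f x := by
  rw [pd, pd, show (fun y => c * f y) = c • f from rfl, fderiv_const_smul_field]
  rfl

lemma pd_const {m : ℕ} (a : Fin m) (c : ℝ) (x : EuclideanSpace ℝ (Fin m)) :
    pd a (fun _ => c) x = 0 := by
  simp [pd]

lemma vMN_eq_mnCubic (m : ℕ) (i j k : Fin m) :
    vMN m i j k = fun y => 1 / √(((m : ℝ) - 1) * ((m : ℝ) + 2)) *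
      mnCubic ((m : ℝ) + 2) (fun t => y t / ‖y‖) i j k := by
  funext y
  simp only [vMN, mnCubic]
  ring

section UnitSphere

variable {m : ℕ} {x : EuclideanSpace ℝ (Fin m)}

lemma pd_vMN (hx : x ≠ 0) (a i j k : Fin m) :
    pd a (vMN m i j k) x = 1 / √(((m : ℝ) - 1) * ((m : ℝ) + 2)) *
      mnCubicDeriv ((m : ℝ) + 2) (fun t => x t / ‖x‖)
        (fun t => pd a (fun y => y t / ‖y‖) x) i j k := by
  rw [vMN_eq_mnCubic, pd_const_mul, pd,
    fderiv_mnCubic_comp_apply fun t => (hasFDerivAt_coord_div_norm hx t).differentiableAt]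
  rfl

lemma dotProduct_self_coord_div_norm (hx : x ≠ 0) :
    (fun t => x t / ‖x‖) ⬝ᵥ (fun t => x t / ‖x‖) = 1 := by
  have hr : ‖x‖ ≠ 0 := norm_ne_zero_iff.mpr hx
  simp only [dotProduct, ← sq, div_pow, ← sum_div, ← EuclideanSpace.real_norm_sq_eq]
  exact div_self (pow_ne_zero 2 hr)

lemma pd_coord_div_norm (hx : x ≠ 0) (a : Fin m) :
    (fun t => pd a (fun y => y t / ‖y‖) x) =
      ‖x‖⁻¹ • (Pi.single a 1 - (x a / ‖x‖) • fun t => x t / ‖x‖) := by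
  ext t
  rw [pd, (hasFDerivAt_coord_div_norm hx t).fderiv]
  simp only [smul_apply, sub_apply, PiLp.proj_apply, PiLp.single_apply, coe_innerSL_apply,
    EuclideanSpace.inner_single_right, ringHom_apply, one_mul, smul_eq_mul, Pi.smul_apply,
    Pi.sub_apply, Pi.single_apply]
  ring

lemma pd_coord_div_norm_dotProduct (hx : x ≠ 0) (a : Fin m) :
    (fun t => pd a (fun y => y t / ‖y‖) x) ⬝ᵥ (fun t => x t / ‖x‖) = 0 := by
  simp only [pd_coord_div_norm hx, smul_dotProduct, sub_dotProduct, single_dotProduct,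
    dotProduct_self_coord_div_norm hx, smul_eq_mul]
  ring

lemma sum_dotProduct_self_pd_coord_div_norm (hx : x ≠ 0) :
    ∑ a, (fun t => pd a (fun y => y t / ‖y‖) x) ⬝ᵥ (fun t => pd a (fun y => y t / ‖y‖) x) =
      ((m : ℝ) - 1) / ‖x‖ ^ 2 := by
  calc ∑ a, (fun t => pd a (fun y => y t / ‖y‖) x) ⬝ᵥ (fun t => pd a (fun y => y t / ‖y‖) x)
      = ∑ a, (1 - x a / ‖x‖ * (x a / ‖x‖)) / ‖x‖ ^ 2 := by
        refine sum_congr rfl fun a _ => ?_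
        simp only [pd_coord_div_norm hx, smul_dotProduct, dotProduct_smul, sub_dotProduct,
          dotProduct_sub, single_dotProduct, dotProduct_single, dotProduct_self_coord_div_norm hx,
          smul_eq_mul, Pi.smul_apply, Pi.sub_apply, Pi.single_eq_same]
        ring
    _ = ((m : ℝ) - 1) / ‖x‖ ^ 2 := by
        rw [← sum_div, sum_sub_distrib]
        change (∑ _a : Fin m, (1 : ℝ) - (fun t => x t / ‖x‖) ⬝ᵥ (fun t => x t / ‖x‖)) / _ = _
        simp [dotProduct_self_coord_div_norm hx]

theorem gradSq_vMN (hm : 2 ≤ m) (hx : x ≠ 0) :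
    gradSq (fun q : Fin m × Fin m × Fin m => vMN m q.1 q.2.1 q.2.2) x = 3 * (m + 1) / ‖x‖ ^ 2 := by
  have hm' : (2 : ℝ) ≤ m := by exact_mod_cast hm
  have hc : (1 / √(((m : ℝ) - 1) * ((m : ℝ) + 2))) ^ 2 = 1 / (((m : ℝ) - 1) * ((m : ℝ) + 2)) := by
    rw [div_pow, one_pow, Real.sq_sqrt (by nlinarith)]
  calc gradSq (fun q : Fin m × Fin m × Fin m => vMN m q.1 q.2.1 q.2.2) x
      = (1 / √(((m : ℝ) - 1) * ((m : ℝ) + 2))) ^ 2 * ∑ a, ∑ i, ∑ j, ∑ k,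
          mnCubicDeriv ((m : ℝ) + 2) (fun t => x t / ‖x‖)
            (fun t => pd a (fun y => y t / ‖y‖) x) i j k ^ 2 := by
        simp only [gradSq, Fintype.sum_prod_type, pd_vMN hx, mul_pow, ← mul_sum]
    _ = 3 * (m + 1) / ‖x‖ ^ 2 := by
        simp only [sum_sq_mnCubicDeriv (dotProduct_self_coord_div_norm hx)
          (pd_coord_div_norm_dotProduct hx _), ← mul_sum, sum_dotProduct_self_pd_coord_div_norm hx,
          Fintype.card_fin, hc]
        have hm₁ : (m : ℝ) - 1 ≠ 0 := by linarith
        have hm₂ : (m : ℝ) + 2 ≠ 0 := by linarith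
        field_simp
        ring

end UnitSphere

lemma gradSq_vTilde (m : ℕ) (β : ℝ) (x : EuclideanSpace ℝ (Fin m)) :
    gradSq (vTilde m β) x =
      sin β ^ 2 * gradSq (fun q : Fin m × Fin m × Fin m => vMN m q.1 q.2.1 q.2.2) x := by
  simp only [gradSq, Fintype.sum_sum_type, vTilde, pd_const_mul, pd_const, mul_pow, ← mul_sum,
    zero_pow two_ne_zero, sum_const_zero, add_zero]

theorem stmt17_general (m : ℕ) (hm : 4 < m) (β : ℝ)
    (hsin : Real.sin β ^ 2 = (5 / 6) * (((m : ℝ) - 1) / ((m : ℝ) + 1)))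
    (x : EuclideanSpace ℝ (Fin m)) (hx : x ≠ 0) :
    gradSq (vTilde m β) x / 2 = (5 / 4) * (((m : ℝ) - 1) / ‖x‖ ^ 2) := by
  rw [gradSq_vTilde, gradSq_vMN (by omega) hx, hsin]
  have hm₁ : (m : ℝ) + 1 ≠ 0 := by positivity
  field_simp
  ring

theorem stmt17 (m : ℕ) (hm : 4 < m) (β : ℝ) (hβ : β ∈ Set.Ioo 0 (π / 2))
    (hsin : Real.sin β ^ 2 = (5 / 6) * (((m : ℝ) - 1) / ((m : ℝ) + 1)))
    (x : EuclideanSpace ℝ (Fin m)) (hx : x ≠ 0) :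
    gradSq (vTilde m β) x / 2 = (5 / 4) * (((m : ℝ) - 1) / ‖x‖ ^ 2) :=
  stmt17_general m hm β hsin x hx
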